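/- For n ≥ 2 and adjacent residues i, j = i+1 in ℤ/nℤ (with n ≥ 3 so that i−1 ≠ i+1), the operators E_i, E_j on Fock space satisfy the Serre relation E_i² E_j − 2 E_i E_j E_i + E_j E_i² = 0 evaluated on every charged partition basis vector ⟨γ|. -/

import Mathlib

/-- A charged partition: an integer charge together with a partition
(weakly decreasing, eventually zero sequence of naturals). -/
structure ChargedPartition where
  charge : ℤ
  parts : ℕ → ℕ
  antitone : ∀ ⦃i j : ℕ⦄, i ≤ j → parts j ≤ parts i
  eventually_zero : ∃ N : ℕ, ∀ j : ℕ, N ≤ j → parts j = 0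

/-- `AddBox γ μ k` : μ is obtained from γ by adding one box of (integer) content `k`
(content = charge + column − row). -/
def AddBox (γ μ : ChargedPartition) (k : ℤ) : Prop :=
  μ.charge = γ.charge ∧
  ∃ r : ℕ, μ.parts = Function.update γ.parts r (γ.parts r + 1) ∧
    (γ.charge + (γ.parts r : ℤ) - (r : ℤ)) = k

/-- `RemoveBox γ μ k` : μ is obtained from γ by removing one box of content `k`. -/
def RemoveBox (γ μ : ChargedPartition) (k : ℤ) : Prop := AddBox μ γ k

/-- Removing one box whose color (content mod n) is `i`. -/
def RemoveBoxC (n : ℕ) (γ μ : ChargedPartition) (i : ZMod n) : Prop :=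
  ∃ k : ℤ, (k : ZMod n) = i ∧ RemoveBox γ μ k

/-- Adding one box whose color (content mod n) is `i`. -/
def AddBoxC (n : ℕ) (γ μ : ChargedPartition) (i : ZMod n) : Prop :=
  ∃ k : ℤ, (k : ZMod n) = i ∧ AddBox γ μ k

/-- Fermionic Fock space: the free ℂ-vector space on charged partitions. -/
abbrev Fock := ChargedPartition →₀ ℂ

/-- The Chevalley operator `E i` : ⟨γ|E_i = Σ ⟨μ| over μ obtained from γ by
removing one i-colored box. -/
noncomputable def Eop (n : ℕ) (i : ZMod n) : Fock →ₗ[ℂ] Fock :=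
  Finsupp.lift Fock ℂ ChargedPartition
    (fun γ => ∑ᶠ μ ∈ {μ : ChargedPartition | RemoveBoxC n γ μ i}, Finsupp.single μ (1 : ℂ))

/-- The Chevalley operator `F i` : ⟨γ|F_i = Σ ⟨μ| over μ obtained from γ by
adding one i-colored box. -/
noncomputable def Fop (n : ℕ) (i : ZMod n) : Fock →ₗ[ℂ] Fock :=
  Finsupp.lift Fock ℂ ChargedPartition
    (fun γ => ∑ᶠ μ ∈ {μ : ChargedPartition | AddBoxC n γ μ i}, Finsupp.single μ (1 : ℂ))

/-!
A diagram has at most one removable box of each content, so `E_c` is the sum, over contents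
`k ≡ c`, of the partial maps `r_k` removing the box of content `k`; below a fixed `γ` only finitely
many `k` contribute. These maps satisfy `r_k² = 0`, `r_k r_m = r_m r_k` for `|k - m| ≠ 1`, and
`r_k r_{k+1} r_k = 0`. For `n ≥ 3`, two distinct contents of colour `i` are never adjacent, and a
content of colour `i + 1` is adjacent to at most one of them, namely as its successor. In any ring
these relations make the Serre combination vanish: the terms indexed by `(x, y)` and `(y, x)`
cancel in pairs.
-/

section Serre

variable {S ι κ : Type*} [Ring S]

theorem serre_add_swap_eq_zero {a b c : S} (hab : Commute a b) (hbc : Commute b c) :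
    (c * a * b - 2 • (a * c * b) + a * b * c) + (c * b * a - 2 • (b * c * a) + b * a * c) = 0 := by
  have h₁ : c * a * b = b * c * a := by
    rw [mul_assoc, hab.eq, ← mul_assoc, hbc.symm.eq]
  have h₂ : a * c * b = b * a * c := by
    rw [mul_assoc, hbc.symm.eq, ← mul_assoc, hab.eq]
  rw [h₁, h₂, hbc.symm.eq, hab.eq]
  abel

theorem serre_sum_eq_zero {a : ι → S} {b : κ → S} {A : Finset ι} {B : Finset κ}
    (ha_sq : ∀ x ∈ A, a x * a x = 0)
    (ha_comm : ∀ x ∈ A, ∀ y ∈ A, Commute (a x) (a y))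
    (hab : ∀ x ∈ A, ∀ z ∈ B, Commute (a x) (b z) ∨ a x * b z * a x = 0)
    (hab₂ : ∀ x ∈ A, ∀ y ∈ A, x ≠ y → ∀ z ∈ B, Commute (a x) (b z) ∨ Commute (a y) (b z)) :
    (∑ z ∈ B, b z) * (∑ x ∈ A, a x) * (∑ x ∈ A, a x)
      - 2 • ((∑ x ∈ A, a x) * (∑ z ∈ B, b z) * (∑ x ∈ A, a x))
      + (∑ x ∈ A, a x) * (∑ x ∈ A, a x) * (∑ z ∈ B, b z) = 0 := by
  set f := ∑ z ∈ B, b z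
  let Q : ι × ι → S := fun p => f * a p.1 * a p.2 - 2 • (a p.1 * f * a p.2) + a p.1 * a p.2 * f
  have hQ : ∀ x y, Q (x, y)
      = ∑ z ∈ B, (b z * a x * a y - 2 • (a x * b z * a y) + a x * a y * b z) := by
    intro x y
    simp only [Q, f, Finset.sum_mul, Finset.mul_sum, Finset.smul_sum, Finset.sum_add_distrib,
      Finset.sum_sub_distrib]
  have hdiag : ∀ x ∈ A, Q (x, x) = 0 := by
    intro x hx
    rw [hQ]
    refine Finset.sum_eq_zero fun z hz => ?_
    have hxzx : a x * b z * a x = 0 := (hab x hx z hz).elim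
      (fun h => by rw [h.eq, mul_assoc, ha_sq x hx, mul_zero]) id
    rw [hxzx, mul_assoc, ha_sq x hx]
    simp
  have hswap : ∀ x ∈ A, ∀ y ∈ A, Q (x, y) + Q (y, x) = 0 := by
    intro x hx y hy
    obtain rfl | hxy := eq_or_ne x y
    · rw [hdiag x hx, add_zero]
    rw [hQ, hQ, ← Finset.sum_add_distrib]
    refine Finset.sum_eq_zero fun z hz => ?_
    rcases hab₂ x hx y hy hxy z hz with h | h
    · rw [add_comm]; exact serre_add_swap_eq_zero (ha_comm y hy x hx) h
    · exact serre_add_swap_eq_zero (ha_comm x hx y hy) h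
  have hsum : f * (∑ x ∈ A, a x) * (∑ x ∈ A, a x)
      - 2 • ((∑ x ∈ A, a x) * f * (∑ x ∈ A, a x))
      + (∑ x ∈ A, a x) * (∑ x ∈ A, a x) * f = ∑ p ∈ A ×ˢ A, Q p := by
    simp only [Q, Finset.sum_product_right, Finset.sum_mul, Finset.mul_sum, Finset.smul_sum,
      Finset.sum_add_distrib, Finset.sum_sub_distrib]
  rw [hsum]
  refine Finset.sum_involution (fun p _ => p.swap)
    (fun p hp => hswap _ (Finset.mem_product.1 hp).1 _ (Finset.mem_product.1 hp).2)
    (fun p hp hQp hfix => hQp ?_) (fun p hp => Finset.mem_product.2 (Finset.mem_product.1 hp).symm)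
    (fun p _ => p.swap_swap)
  obtain ⟨x, y⟩ := p
  obtain rfl : y = x := congrArg Prod.fst hfix
  exact hdiag _ (Finset.mem_product.1 hp).1

end Serre

namespace ChargedPartition

theorem ext {μ ν : ChargedPartition} (hc : μ.charge = ν.charge) (hp : μ.parts = ν.parts) :
    μ = ν := by
  cases μ; cases ν; simp_all

instance : PartialOrder ChargedPartition where
  le μ γ := μ.charge = γ.charge ∧ ∀ r, μ.parts r ≤ γ.parts r
  le_refl γ := ⟨rfl, fun _ => le_rfl⟩
  le_trans _ _ _ h₁ h₂ := ⟨h₁.1.trans h₂.1, fun r => (h₁.2 r).trans (h₂.2 r)⟩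
  le_antisymm _ _ h₁ h₂ := ext h₁.1 (funext fun r => (h₁.2 r).antisymm (h₂.2 r))

def removeCorner (γ : ChargedPartition) (r : ℕ) (h : γ.parts (r + 1) < γ.parts r) :
    ChargedPartition where
  charge := γ.charge
  parts := Function.update γ.parts r (γ.parts r - 1)
  antitone := by
    intro a b hab
    by_cases ha : a = r <;> by_cases hb : b = r
    · rw [ha, hb]
    · rw [Function.update_of_ne hb, ha, Function.update_self]
      have : γ.parts b ≤ γ.parts (r + 1) := γ.antitone (by omega)
      omega
    · rw [Function.update_of_ne ha, hb, Function.update_self]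
      have : γ.parts r ≤ γ.parts a := γ.antitone (by omega)
      omega
    · rw [Function.update_of_ne ha, Function.update_of_ne hb]
      exact γ.antitone hab
  eventually_zero := by
    obtain ⟨N, hN⟩ := γ.eventually_zero
    exact ⟨N + r + 1, fun s hs => by
      rw [Function.update_of_ne (by omega)]; exact hN s (by omega)⟩

end ChargedPartition

open ChargedPartition

theorem removeBox_iff {γ μ : ChargedPartition} {k : ℤ} :
    RemoveBox γ μ k ↔ μ.charge = γ.charge ∧ ∃ r : ℕ, γ.parts (r + 1) < γ.parts r ∧
      μ.parts = Function.update γ.parts r (γ.parts r - 1) ∧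
      γ.charge + (γ.parts r : ℤ) - 1 - r = k := by
  constructor
  · rintro ⟨hc, r, hupd, hk⟩
    have h₁ : γ.parts r = μ.parts r + 1 := by rw [hupd, Function.update_self]
    have h₂ : γ.parts (r + 1) = μ.parts (r + 1) := by
      rw [hupd, Function.update_of_ne (Nat.succ_ne_self r)]
    have : μ.parts (r + 1) ≤ μ.parts r := μ.antitone (Nat.le_succ r)
    refine ⟨hc.symm, r, by omega, ?_, by omega⟩
    rw [hupd, Function.update_self, Nat.add_sub_cancel, Function.update_idem,
      Function.update_eq_self]
  · rintro ⟨hc, r, hlt, hupd, hk⟩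
    refine ⟨hc.symm, r, ?_, ?_⟩
    · rw [hupd, Function.update_idem, Function.update_self, Nat.sub_add_cancel (by omega),
        Function.update_eq_self]
    · rw [hupd, Function.update_self, hc]; omega

theorem removeBox_removeCorner (γ : ChargedPartition) (r : ℕ) (h : γ.parts (r + 1) < γ.parts r) :
    RemoveBox γ (removeCorner γ r h) (γ.charge + (γ.parts r : ℤ) - 1 - r) :=
  removeBox_iff.2 ⟨rfl, r, h, rfl, rfl⟩

namespace RemoveBox

variable {γ μ ν : ChargedPartition} {k : ℤ}

theorem exists_row (h : RemoveBox γ μ k) :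
    ∃ r : ℕ, μ.charge = γ.charge ∧ γ.parts (r + 1) < γ.parts r ∧
      (∀ s, s ≠ r → μ.parts s = γ.parts s) ∧ μ.parts r + 1 = γ.parts r ∧
      γ.charge + (γ.parts r : ℤ) - 1 - r = k := by
  obtain ⟨hc, r, hlt, hupd, hk⟩ := removeBox_iff.1 h
  exact ⟨r, hc, hlt, fun s hs => by rw [hupd, Function.update_of_ne hs],
    by rw [hupd, Function.update_self]; omega, hk⟩

theorem le (h : RemoveBox γ μ k) : μ ≤ γ := by
  obtain ⟨r, hc, -, hs, hr, -⟩ := h.exists_row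
  refine ⟨hc, fun s => ?_⟩
  obtain rfl | hsr := eq_or_ne s r
  · omega
  · exact (hs s hsr).le

/-- The contents of the removable corners strictly decrease down the rows. -/
theorem unique (h₁ : RemoveBox γ μ k) (h₂ : RemoveBox γ ν k) : μ = ν := by
  obtain ⟨r, hc, hlt, hs, hr, hk⟩ := h₁.exists_row
  obtain ⟨r', hc', hlt', hs', hr', hk'⟩ := h₂.exists_row
  obtain rfl : r = r' := by
    rcases lt_trichotomy r r' with h | h | h
    · have := γ.antitone h.le; omega
    · exact h
    · have := γ.antitone h.le; omega
  refine ext (hc.trans hc'.symm) (funext fun s => ?_)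
  obtain rfl | hsr := eq_or_ne s r
  · omega
  · rw [hs s hsr, hs' s hsr]

theorem content_unique {k' : ℤ} (h₁ : RemoveBox γ μ k) (h₂ : RemoveBox γ μ k') : k = k' := by
  obtain ⟨r, hc, hlt, hs, hr, hk⟩ := h₁.exists_row
  obtain ⟨r', hc', hlt', hs', hr', hk'⟩ := h₂.exists_row
  obtain rfl : r = r' := by
    by_contra hne
    have := hs r' (Ne.symm hne)
    have := hs' r hne
    omega
  omega

theorem not_removeBox_same (h₁ : RemoveBox γ μ k) (h₂ : RemoveBox μ ν k) : False := by
  obtain ⟨r, hc, hlt, hs, hr, hk⟩ := h₁.exists_row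
  obtain ⟨r', hc', hlt', hs', hr', hk'⟩ := h₂.exists_row
  obtain rfl | hrr := eq_or_ne r' r
  · omega
  · have := hs r' hrr
    rcases lt_trichotomy r r' with h | h | h
    · have := γ.antitone h.le; omega
    · exact hrr h.symm
    · have := γ.antitone h.le; omega

theorem swap {m : ℤ} (hmk : m ≠ k + 1) (hkm : k ≠ m + 1)
    (h₁ : RemoveBox γ μ k) (h₂ : RemoveBox μ ν m) :
    ∃ μ', RemoveBox γ μ' m ∧ RemoveBox μ' ν k := by
  obtain ⟨r₁, hc₁, hlt₁, hs₁, hr₁, hk₁⟩ := h₁.exists_row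
  obtain ⟨r₂, hc₂, hlt₂, hs₂, hr₂, hk₂⟩ := h₂.exists_row
  have hne : r₂ ≠ r₁ := by rintro rfl; omega
  have hγr₂ : μ.parts r₂ = γ.parts r₂ := hs₁ r₂ hne
  have hlt : γ.parts (r₂ + 1) < γ.parts r₂ := by
    by_cases hadj : r₂ + 1 = r₁
    · subst hadj; omega
    · have := hs₁ _ hadj; omega
  have hk : γ.charge + (γ.parts r₂ : ℤ) - 1 - r₂ = m := by omega
  refine ⟨removeCorner γ r₂ hlt, hk ▸ removeBox_removeCorner γ r₂ hlt,
    removeBox_iff.2 ⟨by simp only [removeCorner]; omega, r₁, ?_, ?_, ?_⟩⟩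
  · simp only [removeCorner, Function.update_of_ne (Ne.symm hne)]
    by_cases hadj : r₁ + 1 = r₂
    · subst hadj; rw [Function.update_self]; omega
    · rw [Function.update_of_ne hadj]; omega
  · funext s
    simp only [removeCorner, Function.update_of_ne (Ne.symm hne)]
    by_cases hs : s = r₁
    · subst hs
      rw [Function.update_self, hs₂ s (Ne.symm hne)]
      omega
    · rw [Function.update_of_ne hs]
      by_cases hs' : s = r₂
      · subst hs'; rw [Function.update_self]; omega
      · rw [Function.update_of_ne hs', hs₂ s hs', hs₁ s hs]
  · simp only [removeCorner, Function.update_of_ne (Ne.symm hne)]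
    omega

theorem not_removeBox_succ_removeBox {ρ : ChargedPartition}
    (h₁ : RemoveBox γ μ k) (h₂ : RemoveBox μ ν (k + 1)) (h₃ : RemoveBox ν ρ k) : False := by
  obtain ⟨r₁, hc₁, hlt₁, hs₁, hr₁, hk₁⟩ := h₁.exists_row
  obtain ⟨r₂, hc₂, hlt₂, hs₂, hr₂, hk₂⟩ := h₂.exists_row
  obtain ⟨r₃, hc₃, hlt₃, hs₃, hr₃, hk₃⟩ := h₃.exists_row
  have hne : r₂ ≠ r₁ := by rintro rfl; omega
  have := hs₁ r₂ hne
  obtain ⟨rfl, hpp⟩ : r₁ = r₂ + 1 ∧ γ.parts r₂ = γ.parts r₁ := by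
    rcases lt_trichotomy r₁ r₂ with h | h | h
    · have := γ.antitone h.le; omega
    · exact absurd h.symm hne
    · have := γ.antitone h.le; omega
  have := hs₂ (r₂ + 1) (Ne.symm hne)
  obtain rfl | h₃₁ := eq_or_ne r₃ (r₂ + 1)
  · omega
  obtain rfl | h₃₂ := eq_or_ne r₃ r₂
  · omega
  have : ν.parts r₃ = γ.parts r₃ := by rw [hs₂ r₃ h₃₂, hs₁ r₃ h₃₁]
  rcases lt_trichotomy r₃ (r₂ + 1) with h | h | h
  · have := γ.antitone h.le; omega
  · exact h₃₁ h
  · have := γ.antitone h.le; omega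

end RemoveBox

open Classical in
/-- Well defined by `RemoveBox.unique`: `γ` has at most one removable box of content `k`. -/
noncomputable def removeContent (k : ℤ) (γ : ChargedPartition) : Option ChargedPartition :=
  if h : ∃ μ, RemoveBox γ μ k then some h.choose else none

theorem removeContent_eq_some_iff {k : ℤ} {γ μ : ChargedPartition} :
    removeContent k γ = some μ ↔ RemoveBox γ μ k := by
  unfold removeContent
  split_ifs with h
  · exact ⟨fun hμ => Option.some.inj hμ ▸ h.choose_spec,
      fun hμ => congrArg some (h.choose_spec.unique hμ)⟩
  · exact ⟨nofun, fun hμ => (h ⟨μ, hμ⟩).elim⟩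

theorem removeContent_bind_comm {k m : ℤ} (hmk : m ≠ k + 1) (hkm : k ≠ m + 1)
    (γ : ChargedPartition) :
    (removeContent k γ).bind (removeContent m) = (removeContent m γ).bind (removeContent k) := by
  ext ν
  simp only [Option.bind_eq_some_iff, removeContent_eq_some_iff]
  exact ⟨fun ⟨_, h₁, h₂⟩ => h₁.swap hmk hkm h₂, fun ⟨_, h₁, h₂⟩ => h₁.swap hkm hmk h₂⟩

theorem removeContent_bind_self (k : ℤ) (γ : ChargedPartition) :
    (removeContent k γ).bind (removeContent k) = none := by
  refine Option.eq_none_iff_forall_ne_some.2 fun ν h => ?_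
  obtain ⟨μ, h₁, h₂⟩ := Option.bind_eq_some_iff.1 h
  exact (removeContent_eq_some_iff.1 h₁).not_removeBox_same (removeContent_eq_some_iff.1 h₂)

theorem removeContent_bind_succ_bind (k : ℤ) (γ : ChargedPartition) :
    ((removeContent k γ).bind (removeContent (k + 1))).bind (removeContent k) = none := by
  refine Option.eq_none_iff_forall_ne_some.2 fun ρ h => ?_
  obtain ⟨ν, h₂, h₃⟩ := Option.bind_eq_some_iff.1 h
  obtain ⟨μ, h₁, h₂⟩ := Option.bind_eq_some_iff.1 h₂
  exact (removeContent_eq_some_iff.1 h₁).not_removeBox_succ_removeBox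
    (removeContent_eq_some_iff.1 h₂) (removeContent_eq_some_iff.1 h₃)

noncomputable def optionSingle (o : Option ChargedPartition) : Fock :=
  o.elim 0 (Finsupp.single · 1)

noncomputable def removeOp (k : ℤ) : Module.End ℂ Fock :=
  Finsupp.lift Fock ℂ ChargedPartition fun γ => optionSingle (removeContent k γ)

theorem removeOp_single (k : ℤ) (γ : ChargedPartition) :
    removeOp k (Finsupp.single γ 1) = optionSingle (removeContent k γ) := by
  simp [removeOp]

theorem removeOp_optionSingle (k : ℤ) (o : Option ChargedPartition) :
    removeOp k (optionSingle o) = optionSingle (o.bind (removeContent k)) := by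
  cases o with
  | none => simp [optionSingle]
  | some γ => exact removeOp_single k γ

theorem Fock.end_ext {f g : Module.End ℂ Fock}
    (h : ∀ γ, f (Finsupp.single γ 1) = g (Finsupp.single γ 1)) : f = g :=
  Finsupp.lhom_ext' fun γ => LinearMap.ext_ring (h γ)

theorem removeOp_mul_removeOp_single (k m : ℤ) (γ : ChargedPartition) :
    (removeOp m * removeOp k) (Finsupp.single γ 1)
      = optionSingle ((removeContent k γ).bind (removeContent m)) := by
  rw [Module.End.mul_apply, removeOp_single, removeOp_optionSingle]

theorem removeOp_mul_self (k : ℤ) : removeOp k * removeOp k = 0 :=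
  Fock.end_ext fun γ => by
    rw [removeOp_mul_removeOp_single, removeContent_bind_self]
    rfl

theorem commute_removeOp {k m : ℤ} (hmk : m ≠ k + 1) (hkm : k ≠ m + 1) :
    Commute (removeOp k) (removeOp m) :=
  Fock.end_ext fun γ => by
    rw [removeOp_mul_removeOp_single, removeOp_mul_removeOp_single,
      removeContent_bind_comm hkm hmk]

theorem removeOp_mul_succ_mul (k : ℤ) : removeOp k * removeOp (k + 1) * removeOp k = 0 :=
  Fock.end_ext fun γ => by
    rw [mul_assoc, Module.End.mul_apply, removeOp_mul_removeOp_single, removeOp_optionSingle,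
      removeContent_bind_succ_bind]
    rfl

theorem exists_content_window (γ : ChargedPartition) :
    ∃ W : Finset ℤ, ∀ μ ≤ γ, ∀ ν k, RemoveBox μ ν k → k ∈ W := by
  obtain ⟨N, hN⟩ := γ.eventually_zero
  refine ⟨Finset.Icc (γ.charge - N) (γ.charge + γ.parts 0), fun μ ⟨hc, hle⟩ ν k h => ?_⟩
  obtain ⟨r, -, hlt, -, -, rfl⟩ := h.exists_row
  have hr : r < N := by
    by_contra! hr
    have := hN r hr
    have := hle r
    omega
  have := hle r
  have := γ.antitone (Nat.zero_le r)
  rw [Finset.mem_Icc]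
  omega

theorem finsum_removeBox_single (k : ℤ) (μ : ChargedPartition) :
    ∑ᶠ ν ∈ {ν | RemoveBox μ ν k}, Finsupp.single ν (1 : ℂ) = optionSingle (removeContent k μ) := by
  simp_rw [← removeContent_eq_some_iff]
  cases removeContent k μ with
  | none => simp [optionSingle]
  | some ν => simp [optionSingle, eq_comm]

theorem eop_single_eq_sum {μ : ChargedPartition} {W : Finset ℤ}
    (hW : ∀ ν k, RemoveBox μ ν k → k ∈ W) (n : ℕ) (c : ZMod n) :
    Eop n c (Finsupp.single μ 1)
      = ∑ k ∈ W.filter (fun k : ℤ => (k : ZMod n) = c), removeOp k (Finsupp.single μ 1) := by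
  have hset : {ν | RemoveBoxC n μ ν c}
      = ⋃ k ∈ (↑(W.filter fun k : ℤ => (k : ZMod n) = c) : Set ℤ), {ν | RemoveBox μ ν k} := by
    ext ν
    simp only [RemoveBoxC, Set.mem_ofPred_eq, Set.mem_iUnion, Finset.coe_filter, exists_prop]
    exact ⟨fun ⟨k, hk, h⟩ => ⟨k, ⟨hW ν k h, hk⟩, h⟩, fun ⟨k, ⟨_, hk⟩, h⟩ => ⟨k, hk, h⟩⟩
  have hdisj : (↑(W.filter fun k : ℤ => (k : ZMod n) = c) : Set ℤ).PairwiseDisjoint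
      fun k => {ν | RemoveBox μ ν k} :=
    fun k _ k' _ hkk' => Set.disjoint_left.2 fun ν h h' => hkk' (RemoveBox.content_unique h h')
  have hfin : ∀ k, {ν | RemoveBox μ ν k}.Finite :=
    fun k => Set.Subsingleton.finite fun ν h ν' h' => RemoveBox.unique h h'
  rw [Eop, Finsupp.lift_apply, Finsupp.sum_single_index (by simp), one_smul, hset,
    finsum_mem_biUnion hdisj (Finset.finite_toSet _) fun k _ => hfin k, finsum_mem_coe_finset]
  simp only [finsum_removeBox_single, removeOp_single]

theorem removeOp_mapsTo_supported_Iic (k : ℤ) (γ : ChargedPartition) :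
    Set.MapsTo (removeOp k) (Finsupp.supported ℂ ℂ (Set.Iic γ))
      (Finsupp.supported ℂ ℂ (Set.Iic γ)) := by
  intro v hv
  rw [Finsupp.supported_eq_span_single] at hv
  refine (Submodule.span_le (R := ℂ)
    (p := (Finsupp.supported ℂ ℂ (Set.Iic γ)).comap (removeOp k))).2 ?_ hv
  rintro _ ⟨μ, hμ, rfl⟩
  rw [SetLike.mem_coe, Submodule.mem_comap, removeOp_single]
  cases h : removeContent k μ with
  | none => exact Submodule.zero_mem _
  | some ν =>
    exact Finsupp.single_mem_supported ℂ 1 ((removeContent_eq_some_iff.1 h).le.trans hμ)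

noncomputable def truncatedEop (W : Finset ℤ) (n : ℕ) (c : ZMod n) : Module.End ℂ Fock :=
  ∑ k ∈ W.filter (fun k : ℤ => (k : ZMod n) = c), removeOp k

theorem truncatedEop_mapsTo_supported_Iic (W : Finset ℤ) (n : ℕ) (c : ZMod n)
    (γ : ChargedPartition) :
    Set.MapsTo (truncatedEop W n c) (Finsupp.supported ℂ ℂ (Set.Iic γ))
      (Finsupp.supported ℂ ℂ (Set.Iic γ)) := fun v hv => by
  rw [truncatedEop, LinearMap.sum_apply]
  exact Submodule.sum_mem _ fun k _ => removeOp_mapsTo_supported_Iic k γ hv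

theorem exists_eqOn_truncatedEop (γ : ChargedPartition) :
    ∃ W : Finset ℤ, ∀ (n : ℕ) (c : ZMod n),
      Set.EqOn (Eop n c) (truncatedEop W n c) (Finsupp.supported ℂ ℂ (Set.Iic γ)) := by
  obtain ⟨W, hW⟩ := exists_content_window γ
  refine ⟨W, fun n c => ?_⟩
  rw [Finsupp.supported_eq_span_single]
  refine LinearMap.eqOn_span' ?_
  rintro _ ⟨μ, hμ, rfl⟩
  rw [eop_single_eq_sum (hW μ hμ), truncatedEop, LinearMap.sum_apply]

theorem ne_add_of_intCast_eq {n : ℕ} {a b d : ℤ} (h : (a : ZMod n) = b) (hd : d ≠ 0)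
    (hdn : |d| < n) : a ≠ b + d := by
  rintro rfl
  rw [ZMod.intCast_eq_intCast_iff_dvd_sub, sub_add_cancel_left] at h
  exact hd (neg_eq_zero.1 (Int.eq_zero_of_abs_lt_dvd h (by rwa [abs_neg])))

theorem commute_removeOp_of_intCast_eq {n : ℕ} (hn : 2 ≤ n) {x y : ℤ}
    (h : (x : ZMod n) = y) : Commute (removeOp x) (removeOp y) :=
  commute_removeOp (ne_add_of_intCast_eq h.symm one_ne_zero (by rw [abs_one]; omega))
    (ne_add_of_intCast_eq h one_ne_zero (by rw [abs_one]; omega))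

theorem eq_add_one_or_commute_removeOp {n : ℕ} (hn : 3 ≤ n) {i : ZMod n} {x z : ℤ}
    (hx : (x : ZMod n) = i) (hz : (z : ZMod n) = i + 1) :
    z = x + 1 ∨ Commute (removeOp x) (removeOp z) := by
  refine or_iff_not_imp_left.2 fun hzx => commute_removeOp hzx ?_
  have hxz : (x : ZMod n) = ((z - 1 : ℤ) : ZMod n) := by push_cast; rw [hx, hz]; ring
  have := ne_add_of_intCast_eq hxz two_ne_zero (by rw [abs_two]; omega)
  omega

theorem truncatedEop_serre {n : ℕ} (hn : 3 ≤ n) (W : Finset ℤ) (i : ZMod n) :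
    truncatedEop W n (i + 1) * truncatedEop W n i * truncatedEop W n i
      - 2 • (truncatedEop W n i * truncatedEop W n (i + 1) * truncatedEop W n i)
      + truncatedEop W n i * truncatedEop W n i * truncatedEop W n (i + 1) = 0 := by
  have hcol : ∀ {c : ZMod n} {x : ℤ}, x ∈ W.filter (fun k : ℤ => (k : ZMod n) = c) →
      (x : ZMod n) = c := fun hx => (Finset.mem_filter.1 hx).2
  simp only [truncatedEop]
  refine serre_sum_eq_zero (a := removeOp) (b := removeOp) (fun x _ => removeOp_mul_self x)
    (fun x hx y hy => commute_removeOp_of_intCast_eq (by omega) ((hcol hx).trans (hcol hy).symm))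
    (fun x hx z hz => ?_) (fun x hx y hy hxy z hz => ?_)
  · obtain rfl | h := eq_add_one_or_commute_removeOp hn (hcol hx) (hcol hz)
    · exact Or.inr (removeOp_mul_succ_mul x)
    · exact Or.inl h
  · obtain rfl | h := eq_add_one_or_commute_removeOp hn (hcol hx) (hcol hz)
    · exact Or.inr ((eq_add_one_or_commute_removeOp hn (hcol hy) (hcol hz)).resolve_left
        fun h => hxy (by omega))
    · exact Or.inl h

/-- for n ≥ 3 and adjacent residues i and j = i+1 in ℤ/nℤ, the
Serre relation ⟨γ|(E_i²E_j − 2E_iE_jE_i + E_jE_i²) = 0 holds on every charged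
partition basis vector of Fock space (right action: ⟨γ|E_iE_iE_j means apply
E_i, then E_i, then E_j). -/
theorem fock_E_serre_relation (n : ℕ) (hn : 3 ≤ n) (i j : ZMod n) (hj : j = i + 1)
    (γ : ChargedPartition) :
    Eop n j (Eop n i (Eop n i (Finsupp.single γ 1)))
      - (2 : ℂ) • Eop n i (Eop n j (Eop n i (Finsupp.single γ 1)))
      + Eop n i (Eop n i (Eop n j (Finsupp.single γ 1))) = 0 := by
  obtain ⟨W, hW⟩ := exists_eqOn_truncatedEop γ
  have hγ : Finsupp.single γ (1 : ℂ) ∈ Finsupp.supported ℂ ℂ (Set.Iic γ) :=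
    Finsupp.single_mem_supported ℂ 1 Set.self_mem_Iic
  have hmaps := fun c => truncatedEop_mapsTo_supported_Iic W n c γ
  have hword : ∀ a b c : ZMod n, Eop n c (Eop n b (Eop n a (Finsupp.single γ 1)))
      = (truncatedEop W n c * truncatedEop W n b * truncatedEop W n a) (Finsupp.single γ 1) := by
    intro a b c
    rw [hW n a hγ, hW n b (hmaps a hγ), hW n c (hmaps b (hmaps a hγ))]
    rfl
  rw [hword, hword, hword, hj, ofNat_smul_eq_nsmul (R := ℂ), ← LinearMap.smul_apply,
    ← LinearMap.sub_apply, ← LinearMap.add_apply, truncatedEop_serre hn, LinearMap.zero_apply]
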